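/- arXiv:2010.02540 — 3 statements merged into one kernel-verified Lean document; each statement's English description precedes it below -/
import Mathlib

section
/- Under the deterministic multi-agent SIR recursion, for every agent i ∈ V and every k ∈ ℕ: y_i(k) = 1 if and only if k_i < ∞ and k ≥ k_i + R_i. In particular, if k_i < ∞ then R_i is the smallest positive integer r with y_i(k_i + r) = 1, and if k_i = ∞ then y_i(k) = 0 for all k. -/
open Finset

/-- The step function `ρ : ℤ → {0,1}`, `ρ(z) = 1` iff `z > 0`. -/
def stepFn (z : ℤ) : ℕ := if 0 < z then 1 else 0

/-!
The cumulative count `s` grows by at most one per step and stays `0` until the first infection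
time `m`, so `s k ≤ k - m`. Conversely, an infected agent whose count is still below `R` remains
infected, so `s (m + t) = t` for `t ≤ R`. Hence `R ≤ s k` exactly when `m + R ≤ k`, and
`y k = 1` is the statement `R ≤ s k`.
-/

lemma stepFn_le_one (z : ℤ) : stepFn z ≤ 1 := by
  unfold stepFn; split <;> omega

lemma stepFn_eq_one_iff {z : ℤ} : stepFn z = 1 ↔ 0 < z := by
  unfold stepFn; split <;> simp_all

lemma one_sub_stepFn_sub_eq_one_iff {R s : ℕ} : 1 - stepFn ((R : ℤ) - s) = 1 ↔ R ≤ s := by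
  unfold stepFn; split <;> omega

noncomputable def firstInfectionTime (x : ℕ → ℕ) : ℕ∞ :=
  sInf {n : ℕ∞ | ∃ m : ℕ, x m = 1 ∧ n = (m : ℕ∞)}

lemma firstInfectionTime_eq_top {x : ℕ → ℕ} (h : ∀ m, x m ≠ 1) : firstInfectionTime x = ⊤ := by
  rw [firstInfectionTime, sInf_eq_top]
  rintro _ ⟨m, hm, -⟩
  exact absurd hm (h m)

lemma firstInfectionTime_eq_coe {x : ℕ → ℕ} {m : ℕ} (hm : x m = 1) (hmin : ∀ j < m, x j ≠ 1) :
    firstInfectionTime x = m := by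
  refine le_antisymm (sInf_le ⟨m, hm, rfl⟩) (le_sInf ?_)
  rintro _ ⟨j, hj, rfl⟩
  exact_mod_cast not_lt.1 fun hjm => hmin j hjm hj

section Accumulation

variable {R m : ℕ} {x s : ℕ → ℕ}

lemma le_sub_of_forall_lt_eq_zero (hs0 : s 0 = 0) (hs : ∀ k, s (k + 1) = s k + x k)
    (hx : ∀ k, x k ≤ 1) (hmin : ∀ j < m, x j = 0) (k : ℕ) : s k ≤ k - m := by
  induction k with
  | zero => simp [hs0]
  | succ k ih =>
    rw [hs]
    rcases lt_or_ge k m with hk | hk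
    · have := hmin k hk; omega
    · have := hx k; omega

lemma apply_add_eq_one_and_eq (hs : ∀ k, s (k + 1) = s k + x k)
    (hpersist : ∀ k, x k = 1 → s k < R → x (k + 1) = 1) (hm : x m = 1) (hsm : s m = 0) :
    ∀ t ≤ R, x (m + t) = 1 ∧ s (m + t) = t := by
  intro t ht
  induction t with
  | zero => exact ⟨hm, hsm⟩
  | succ t ih =>
    obtain ⟨hxt, hst⟩ := ih (by omega)
    exact ⟨hpersist (m + t) hxt (by omega), by rw [← add_assoc, hs, hxt, hst]⟩

lemma le_iff_add_le_of_first (hR : 1 ≤ R) (hs0 : s 0 = 0) (hs : ∀ k, s (k + 1) = s k + x k)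
    (hx : ∀ k, x k ≤ 1) (hpersist : ∀ k, x k = 1 → s k < R → x (k + 1) = 1)
    (hm : x m = 1) (hmin : ∀ j < m, x j = 0) (k : ℕ) : R ≤ s k ↔ m + R ≤ k := by
  have hbound := le_sub_of_forall_lt_eq_zero hs0 hs hx hmin
  refine ⟨fun h => by have := hbound k; omega, fun h => ?_⟩
  have hsm : s m = 0 := by simpa using hbound m
  have hmono : Monotone s := monotone_nat_of_le_succ fun k => by rw [hs]; omega
  calc R = s (m + R) := ((apply_add_eq_one_and_eq hs hpersist hm hsm R le_rfl).2).symm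
    _ ≤ s k := hmono h

theorem le_iff_firstInfectionTime_add_le (hR : 1 ≤ R) (hs0 : s 0 = 0)
    (hs : ∀ k, s (k + 1) = s k + x k) (hx : ∀ k, x k ≤ 1)
    (hpersist : ∀ k, x k = 1 → s k < R → x (k + 1) = 1) (k : ℕ) :
    R ≤ s k ↔ firstInfectionTime x ≠ ⊤ ∧ firstInfectionTime x + R ≤ k := by
  by_cases hinf : ∃ m, x m = 1
  · have hmin : ∀ j < Nat.find hinf, x j = 0 := fun j hj => by
      have := Nat.find_min hinf hj; have := hx j; omega
    rw [le_iff_add_le_of_first hR hs0 hs hx hpersist (Nat.find_spec hinf) hmin,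
      firstInfectionTime_eq_coe (Nat.find_spec hinf) fun j hj => Nat.find_min hinf hj]
    simp only [ne_eq, ENat.natCast_ne_top, not_false_eq_true, true_and]
    exact_mod_cast Iff.rfl
  · push Not at hinf
    have hzero : ∀ j, x j = 0 := fun j => by have := hinf j; have := hx j; omega
    have := le_sub_of_forall_lt_eq_zero hs0 hs hx (m := k) (fun j _ => hzero j) k
    simp only [firstInfectionTime_eq_top hinf, ne_eq, not_true_eq_false, false_and, iff_false]
    omega

end Accumulation

theorem stmt2_general {V : Type*} [Fintype V]
    (E : V → V → Prop) [DecidableRel E]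
    (R : V → ℕ) (hR : ∀ i, 1 ≤ R i)
    (c : ℕ → V → V → ℕ)
    (u : ℕ → V → ℕ)
    (x0 : V → ℕ) (hx0 : ∀ i, x0 i ≤ 1)
    (x s : ℕ → V → ℕ)
    (hx_init : ∀ i, x 0 i = x0 i)
    (hs_init : ∀ i, s 0 i = 0)
    (hx_rec : ∀ k i, x (k + 1) i =
      stepFn ((R i : ℤ) - (s k i : ℤ)) *
        stepFn ((x k i : ℤ) +
          (∑ j ∈ Finset.univ.filter (fun j => E j i), (c k i j : ℤ) * (x k j : ℤ)) +
          (u k i : ℤ)))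
    (hs_rec : ∀ k i, s (k + 1) i = s k i + x k i)
    (y : ℕ → V → ℕ)
    (hy : ∀ k i, y k i = 1 - stepFn ((R i : ℤ) - (s k i : ℤ)))
    (ki : V → ℕ∞)
    (hki : ∀ i, ki i = sInf {n : ℕ∞ | ∃ m : ℕ, x m i = 1 ∧ n = (m : ℕ∞)}) :
    ∀ i : V,
      (∀ k : ℕ, (y k i = 1 ↔ ki i ≠ ⊤ ∧ ki i + (R i : ℕ∞) ≤ (k : ℕ∞))) ∧
      (∀ m : ℕ, ki i = (m : ℕ∞) →
        y (m + R i) i = 1 ∧ ∀ r : ℕ, 0 < r → y (m + r) i = 1 → R i ≤ r) ∧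
      (ki i = ⊤ → ∀ k : ℕ, y k i = 0) := by
  intro i
  have hx : ∀ k, x k i ≤ 1
    | 0 => hx_init i ▸ hx0 i
    | k + 1 => hx_rec k i ▸ mul_le_one₀ (stepFn_le_one _) (Nat.zero_le _) (stepFn_le_one _)
  have hpersist : ∀ k, x k i = 1 → s k i < R i → x (k + 1) i = 1 := fun k hxk hsk => by
    rw [hx_rec, stepFn_eq_one_iff.2 (by omega), stepFn_eq_one_iff.2 (by rw [hxk]; positivity)]
  have hchar : ∀ k, y k i = 1 ↔ ki i ≠ ⊤ ∧ ki i + R i ≤ k := fun k => by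
    rw [hy, one_sub_stepFn_sub_eq_one_iff, hki]
    exact le_iff_firstInfectionTime_add_le (hR i) (hs_init i) (hs_rec · i) hx hpersist k
  refine ⟨hchar, fun m hm => ⟨(hchar _).2 ?_, fun r _ hr => ?_⟩, fun htop k => ?_⟩
  · simp [hm]
  · simpa [hm] using ((hchar _).1 hr).2
  · have := (hchar k).not.2 (by simp [htop])
    have := hy k i
    omega

/-- For every agent `i` and every `k`: `y_i(k) = 1` iff `k_i < ∞` and `k ≥ k_i + R_i`.
In particular, if `k_i < ∞` then `R_i` is the smallest positive integer `r` with
`y_i(k_i + r) = 1`, and if `k_i = ∞` then `y_i(k) = 0` for all `k`. -/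
theorem stmt2 {V : Type*} [Fintype V] [DecidableEq V]
    (E : V → V → Prop) [DecidableRel E]
    (hEsymm : ∀ i j, E i j ↔ E j i) (hEirr : ∀ i, ¬ E i i)
    (R : V → ℕ) (hR : ∀ i, 1 ≤ R i)
    (c : ℕ → V → V → ℕ) (hc01 : ∀ k i j, c k i j ≤ 1)
    (hcsymm : ∀ k i j, c k i j = c k j i)
    (u : ℕ → V → ℕ) (hu01 : ∀ k i, u k i ≤ 1)
    (x0 : V → ℕ) (hx0 : ∀ i, x0 i ≤ 1)
    (x s : ℕ → V → ℕ)
    (hx_init : ∀ i, x 0 i = x0 i)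
    (hs_init : ∀ i, s 0 i = 0)
    (hx_rec : ∀ k i, x (k + 1) i =
      stepFn ((R i : ℤ) - (s k i : ℤ)) *
        stepFn ((x k i : ℤ) +
          (∑ j ∈ Finset.univ.filter (fun j => E j i), (c k i j : ℤ) * (x k j : ℤ)) +
          (u k i : ℤ)))
    (hs_rec : ∀ k i, s (k + 1) i = s k i + x k i)
    (y : ℕ → V → ℕ)
    (hy : ∀ k i, y k i = 1 - stepFn ((R i : ℤ) - (s k i : ℤ)))
    (ki : V → ℕ∞)
    (hki : ∀ i, ki i = sInf {n : ℕ∞ | ∃ m : ℕ, x m i = 1 ∧ n = (m : ℕ∞)}) :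
    ∀ i : V,
      (∀ k : ℕ, (y k i = 1 ↔ ki i ≠ ⊤ ∧ ki i + (R i : ℕ∞) ≤ (k : ℕ∞))) ∧
      (∀ m : ℕ, ki i = (m : ℕ∞) →
        y (m + R i) i = 1 ∧ ∀ r : ℕ, 0 < r → y (m + r) i = 1 → R i ≤ r) ∧
      (ki i = ⊤ → ∀ k : ℕ, y k i = 0) :=
  stmt2_general E R hR c u x0 hx0 x s hx_init hs_init hx_rec hs_rec y hy ki hki
end

section
/- Under the deterministic multi-agent SIR recursion, each agent is infectious exactly on a window of length R_i + 1: for every agent i ∈ V with k_i < ∞ and every k ∈ ℕ, x_i(k) = 1 if and only if k_i ≤ k ≤ k_i + R_i; and if k_i = ∞ then x_i(k) = 0 for all k. -/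
/-!
For a single agent the neighbours only enter through the second factor of `ρ(R_i − s_i) · ρ(…)`,
which is positive whenever the agent itself is infectious. Since `s_i(k_i) = 0`, the agent then
stays infectious while its cumulative infectious time `s_i` is below `R_i`, i.e. for exactly
`R_i + 1` steps; afterwards `s_i ≥ R_i` forever, as `s_i` is nondecreasing, and the first factor
vanishes.
-/

open Finset

lemma stepFn_of_pos {z : ℤ} (h : 0 < z) : stepFn z = 1 := if_pos h

lemma stepFn_of_nonpos {z : ℤ} (h : z ≤ 0) : stepFn z = 0 := if_neg (not_lt.2 h)

lemma ENat.isLeast_of_sInf_eq_coe {p : ℕ → Prop} {m : ℕ}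
    (h : sInf {n : ℕ∞ | ∃ t : ℕ, p t ∧ n = t} = m) : IsLeast {t | p t} m := by
  set S := {n : ℕ∞ | ∃ t : ℕ, p t ∧ n = t}
  have hS : S.Nonempty := by
    by_contra hS
    rw [Set.not_nonempty_iff_eq_empty.1 hS, sInf_empty] at h
    exact ENat.top_ne_natCast m h
  obtain ⟨t, ht, hmt⟩ : sInf S ∈ S := csInf_mem hS
  rw [h, Nat.cast_inj] at hmt
  refine ⟨hmt ▸ ht, fun t ht => ?_⟩
  have : sInf S ≤ t := sInf_le ⟨t, ht, rfl⟩
  exact_mod_cast h ▸ this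

lemma ENat.not_of_sInf_eq_top {p : ℕ → Prop}
    (h : sInf {n : ℕ∞ | ∃ t : ℕ, p t ∧ n = t} = ⊤) (t : ℕ) : ¬ p t := fun ht =>
  ENat.top_ne_natCast t (top_le_iff.1 (h ▸ sInf_le ⟨t, ht, rfl⟩)).symm

/-- The recursion seen from one agent (`x = x_i`, `s = s_i`, `R = R_i`): of its neighbours'
influence only the fact that it cannot cure an infectious agent is kept. -/
structure SIRAgent (R : ℕ) (x s : ℕ → ℕ) : Prop where
  s_zero : s 0 = 0
  s_succ : ∀ k, s (k + 1) = s k + x k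
  x_le_one : ∀ k, x k ≤ 1
  stays_infected : ∀ k, s k < R → x k = 1 → x (k + 1) = 1
  recovered : ∀ k, R ≤ s k → x (k + 1) = 0

namespace SIRAgent

variable {R : ℕ} {x s : ℕ → ℕ} (h : SIRAgent R x s)
include h

lemma s_mono : Monotone s :=
  monotone_nat_of_le_succ fun k => by rw [h.s_succ]; omega

lemma s_eq_zero_of_forall_lt {m : ℕ} (hpre : ∀ t < m, x t = 0) : s m = 0 := by
  induction m with
  | zero => exact h.s_zero
  | succ m ih => rw [h.s_succ, ih fun t ht => hpre t (by omega), hpre m (by omega)]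

lemma infected_of_le {m : ℕ} (hm : x m = 1) (hsm : s m = 0) :
    ∀ d ≤ R, x (m + d) = 1 ∧ s (m + d) = d := by
  intro d
  induction d with
  | zero => exact fun _ => ⟨hm, hsm⟩
  | succ d ih =>
    intro hd
    obtain ⟨hx, hs⟩ := ih (by omega)
    exact ⟨h.stays_infected (m + d) (by omega) hx, by rw [← add_assoc, h.s_succ, hs, hx]⟩

lemma eq_zero_of_lt {n k : ℕ} (hn : R ≤ s n) (hk : n < k) : x k = 0 := by
  obtain ⟨t, rfl⟩ : ∃ t, k = t + 1 := ⟨k - 1, by omega⟩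
  exact h.recovered t (hn.trans (h.s_mono (by omega)))

theorem eq_one_iff {m : ℕ} (hm : IsLeast {t | x t = 1} m) (k : ℕ) :
    x k = 1 ↔ m ≤ k ∧ k ≤ m + R := by
  have hsm : s m = 0 := h.s_eq_zero_of_forall_lt fun t ht => by
    have : x t = 1 → m ≤ t := @hm.2 t
    have := h.x_le_one t
    omega
  have hwindow := h.infected_of_le hm.1 hsm
  constructor
  · intro hk
    refine ⟨hm.2 hk, not_lt.1 fun hlt => ?_⟩
    have := h.eq_zero_of_lt (hwindow R le_rfl).2.ge hlt
    omega
  · rintro ⟨hmk, hkR⟩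
    simpa [Nat.add_sub_cancel' hmk] using (hwindow (k - m) (by omega)).1

end SIRAgent

theorem stmt6_general {V : Type*} [Fintype V]
    (E : V → V → Prop) [DecidableRel E]
    (R : V → ℕ)
    (c : ℕ → V → V → ℕ)
    (u : ℕ → V → ℕ)
    (x0 : V → ℕ) (hx0 : ∀ i, x0 i ≤ 1)
    (x s : ℕ → V → ℕ)
    (hx_init : ∀ i, x 0 i = x0 i)
    (hs_init : ∀ i, s 0 i = 0)
    (hx_rec : ∀ k i, x (k + 1) i =
      stepFn ((R i : ℤ) - (s k i : ℤ)) *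
        stepFn ((x k i : ℤ) +
          (∑ j ∈ Finset.univ.filter (fun j => E j i), (c k i j : ℤ) * (x k j : ℤ)) +
          (u k i : ℤ)))
    (hs_rec : ∀ k i, s (k + 1) i = s k i + x k i)
    (ki : V → ℕ∞)
    (hki : ∀ i, ki i = sInf {n : ℕ∞ | ∃ m : ℕ, x m i = 1 ∧ n = (m : ℕ∞)}) :
    ∀ i : V,
      (∀ m : ℕ, ki i = (m : ℕ∞) → ∀ k : ℕ, (x k i = 1 ↔ m ≤ k ∧ k ≤ m + R i)) ∧
      (ki i = ⊤ → ∀ k : ℕ, x k i = 0) := by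
  intro i
  have hle : ∀ k, x k i ≤ 1
    | 0 => hx_init i ▸ hx0 i
    | k + 1 => hx_rec k i ▸ mul_le_one₀ (stepFn_le_one _) (Nat.zero_le _) (stepFn_le_one _)
  have hagent : SIRAgent (R i) (x · i) (s · i) :=
    { s_zero := hs_init i
      s_succ := (hs_rec · i)
      x_le_one := hle
      stays_infected := fun k hsk hxk => by
        rw [hx_rec, stepFn_of_pos (by omega), stepFn_of_pos (by rw [hxk]; positivity)]
      recovered := fun k hsk => by rw [hx_rec, stepFn_of_nonpos (by omega), zero_mul] }
  refine ⟨fun m hm k => ?_, fun htop k => ?_⟩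
  · exact hagent.eq_one_iff (ENat.isLeast_of_sInf_eq_coe (hki i ▸ hm)) k
  · have := ENat.not_of_sInf_eq_top (hki i ▸ htop) k
    have := hle k
    omega

/-- Each agent is infectious exactly on a window of length `R_i + 1`: for every agent `i`
with `k_i < ∞` and every `k`, `x_i(k) = 1` iff `k_i ≤ k ≤ k_i + R_i`; if `k_i = ∞` then
`x_i(k) = 0` for all `k`. -/
theorem stmt6 {V : Type*} [Fintype V] [DecidableEq V]
    (E : V → V → Prop) [DecidableRel E]
    (hEsymm : ∀ i j, E i j ↔ E j i) (hEirr : ∀ i, ¬ E i i)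
    (R : V → ℕ) (hR : ∀ i, 1 ≤ R i)
    (c : ℕ → V → V → ℕ) (hc01 : ∀ k i j, c k i j ≤ 1)
    (hcsymm : ∀ k i j, c k i j = c k j i)
    (u : ℕ → V → ℕ) (hu01 : ∀ k i, u k i ≤ 1)
    (x0 : V → ℕ) (hx0 : ∀ i, x0 i ≤ 1)
    (x s : ℕ → V → ℕ)
    (hx_init : ∀ i, x 0 i = x0 i)
    (hs_init : ∀ i, s 0 i = 0)
    (hx_rec : ∀ k i, x (k + 1) i =
      stepFn ((R i : ℤ) - (s k i : ℤ)) *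
        stepFn ((x k i : ℤ) +
          (∑ j ∈ Finset.univ.filter (fun j => E j i), (c k i j : ℤ) * (x k j : ℤ)) +
          (u k i : ℤ)))
    (hs_rec : ∀ k i, s (k + 1) i = s k i + x k i)
    (y : ℕ → V → ℕ)
    (hy : ∀ k i, y k i = 1 - stepFn ((R i : ℤ) - (s k i : ℤ)))
    (ki : V → ℕ∞)
    (hki : ∀ i, ki i = sInf {n : ℕ∞ | ∃ m : ℕ, x m i = 1 ∧ n = (m : ℕ∞)}) :
    ∀ i : V,
      (∀ m : ℕ, ki i = (m : ℕ∞) → ∀ k : ℕ, (x k i = 1 ↔ m ≤ k ∧ k ≤ m + R i)) ∧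
      (ki i = ⊤ → ∀ k : ℕ, x k i = 0) :=
  stmt6_general E R c u x0 hx0 x s hx_init hs_init hx_rec hs_rec ki hki
end

section
/- Pathwise recursion for infection times (protected agent): assume x⁰_i = 0 for all i ∈ V, and let i ∈ V be protected against external infection, i.e., u_i(k) = 0 for all k. Then the first infection time satisfies k_i = inf_{j ∈ N_i} inf{k ∈ ℕ | k ≥ 1, c_{ji}(k−1) = 1, and k_j ≤ k−1 ≤ k_j + R_j}, where the inner condition requires k_j < ∞ and the infimum is taken in ℕ ∪ {∞} (inf ∅ = ∞). -/
/-!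
Once an agent is first infected at `k_j`, its infected time `s_j` counts up to `R_j` while it
stays infected and then closes the gate `ρ(R_j - s_j)` for good, so `x_j(m) = 1` exactly for
`m ∈ [k_j, k_j + R_j]`. An agent starting healthy is first infected one step after its infection
pressure `∑ j ∈ N_i, c_ij x_j + u_i` first becomes positive, and for a protected agent `i` the
pressure at time `k - 1` is positive iff some neighbour `j` with `c_ji(k - 1) = 1` is infected
then, i.e. `k - 1 ∈ [k_j, k_j + R_j]`. Taking the first such `k` over all neighbours gives the
formula.
-/

open Finset

lemma stepFn_mul_stepFn_eq_one_iff (z w : ℤ) : stepFn z * stepFn w = 1 ↔ 0 < z ∧ 0 < w := by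
  unfold stepFn; split_ifs <;> simp [*]

lemma stepFn_eq_zero_of_nonpos {z : ℤ} (hz : z ≤ 0) : stepFn z = 0 :=
  if_neg hz.not_gt

noncomputable def hitTime (p : ℕ → Prop) : ℕ∞ := sInf {n | ∃ m : ℕ, p m ∧ n = m}

section hitTime

variable {p q : ℕ → Prop}

lemma hitTime_le {m : ℕ} (hm : p m) : hitTime p ≤ m :=
  sInf_le ⟨m, hm, rfl⟩

lemma hitTime_le_hitTime (h : ∀ n, p n → ∃ m ≤ n, q m) : hitTime q ≤ hitTime p := by
  refine le_sInf ?_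
  rintro _ ⟨n, hn, rfl⟩
  obtain ⟨m, hmn, hm⟩ := h n hn
  exact (hitTime_le hm).trans (Nat.cast_le.2 hmn)

lemma hitTime_eq_top (h : ∀ m, ¬ p m) : hitTime p = ⊤ := by
  refine sInf_eq_top.2 ?_
  rintro _ ⟨m, hm, rfl⟩
  exact absurd hm (h m)

lemma hitTime_eq_coe {N : ℕ} (hN : p N) (hlt : ∀ m < N, ¬ p m) : hitTime p = N := by
  refine le_antisymm (hitTime_le hN) (le_sInf ?_)
  rintro _ ⟨m, hm, rfl⟩
  exact Nat.cast_le.2 (not_lt.1 fun hmN => hlt m hmN hm)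

lemma iInf_hitTime {ι : Type*} (s : Finset ι) (p : ι → ℕ → Prop) :
    ⨅ j ∈ s, hitTime (p j) = hitTime fun m => ∃ j ∈ s, p j m := by
  refine le_antisymm (le_sInf ?_) (le_iInf₂ fun j hj => hitTime_le_hitTime fun m hm => ?_)
  · rintro _ ⟨m, ⟨j, hj, hm⟩, rfl⟩
    exact (iInf₂_le j hj).trans (hitTime_le hm)
  · exact ⟨m, le_rfl, j, hj, hm⟩

end hitTime

/-- One agent's row of the SIR recursion, `a k = ∑ j ∈ N_i, c_ij(k) x_j(k) + u_i(k)` being the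
infection pressure it receives. -/
structure IsSIRTrajectory (R : ℕ) (a : ℕ → ℕ) (x s : ℕ → ℕ) : Prop where
  s_zero : s 0 = 0
  s_succ : ∀ k, s (k + 1) = s k + x k
  x_succ : ∀ k, x (k + 1) = stepFn ((R : ℤ) - s k) * stepFn ((x k + a k : ℕ) : ℤ)

namespace IsSIRTrajectory

variable {R : ℕ} {a x s : ℕ → ℕ} (h : IsSIRTrajectory R a x s)
include h

lemma x_le_one (hx0 : x 0 ≤ 1) : ∀ k, x k ≤ 1
  | 0 => hx0
  | k + 1 => by
    rw [h.x_succ]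
    exact mul_le_one' (stepFn_le_one _) (stepFn_le_one _)

lemma x_succ_eq_one_iff {k : ℕ} : x (k + 1) = 1 ↔ s k < R ∧ 0 < x k + a k := by
  rw [h.x_succ, stepFn_mul_stepFn_eq_one_iff]
  omega

lemma x_succ_eq_zero_of_le {k : ℕ} (hk : R ≤ s k) : x (k + 1) = 0 := by
  rw [h.x_succ, stepFn_eq_zero_of_nonpos (by omega), zero_mul]

lemma s_eq_sum (k : ℕ) : s k = ∑ m ∈ range k, x m := by
  induction k with
  | zero => simp [h.s_zero]
  | succ k ih => rw [h.s_succ, ih, sum_range_succ]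

lemma s_eq_zero_iff {k : ℕ} : s k = 0 ↔ ∀ m < k, x m = 0 := by
  simp [h.s_eq_sum, sum_eq_zero_iff]

lemma monotone_s : Monotone s :=
  monotone_nat_of_le_succ fun k => by rw [h.s_succ]; omega

lemma x_add_eq_one {N : ℕ} (hN : x N = 1) (hsN : s N = 0) :
    ∀ t ≤ R, x (N + t) = 1 ∧ s (N + t) = t := by
  intro t
  induction t with
  | zero => exact fun _ => ⟨hN, hsN⟩
  | succ t ih =>
    intro ht
    show x (N + t + 1) = 1 ∧ s (N + t + 1) = t + 1
    obtain ⟨hx, hs⟩ := ih (by omega)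
    have hs' : s (N + t + 1) = t + 1 := by rw [h.s_succ, hs, hx]
    exact ⟨h.x_succ_eq_one_iff.2 ⟨by omega, by omega⟩, hs'⟩

lemma eq_one_iff_of_first {N m : ℕ} (hN : x N = 1) (hlt : ∀ m < N, x m = 0) :
    x m = 1 ↔ N ≤ m ∧ m ≤ N + R := by
  have hwindow := h.x_add_eq_one hN (h.s_eq_zero_iff.2 hlt)
  constructor
  · intro hm
    refine ⟨not_lt.1 fun hmN => by simp [hlt m hmN] at hm, not_lt.1 fun hmR => ?_⟩
    obtain ⟨k, rfl⟩ : ∃ k, m = k + 1 := ⟨m - 1, by omega⟩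
    have hRk : R ≤ s k := (hwindow R le_rfl).2.symm.le.trans (h.monotone_s (by omega))
    simp [h.x_succ_eq_zero_of_le hRk] at hm
  · rintro ⟨hNm, hmR⟩
    obtain ⟨t, rfl⟩ := Nat.exists_eq_add_of_le hNm
    exact (hwindow t (by omega)).1

lemma eq_one_iff_hitTime_le_and_le_add (hx0 : x 0 ≤ 1) {m : ℕ} :
    x m = 1 ↔ hitTime (x · = 1) ≤ m ∧ (m : ℕ∞) ≤ hitTime (x · = 1) + R := by
  classical
  by_cases hinf : ∃ n, x n = 1
  · have hlt : ∀ m < Nat.find hinf, x m = 0 := fun m hm =>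
      Nat.lt_one_iff.1 ((h.x_le_one hx0 m).lt_of_ne (Nat.find_min hinf hm))
    rw [hitTime_eq_coe (p := (x · = 1)) (Nat.find_spec hinf) fun m hm => Nat.find_min hinf hm,
      h.eq_one_iff_of_first (Nat.find_spec hinf) hlt]
    norm_cast
  · push Not at hinf
    simp [hitTime_eq_top (p := (x · = 1)) hinf, hinf m]

lemma exists_lt_eq_one_of_s_pos (hx0 : x 0 ≤ 1) {k : ℕ} (hk : 0 < s k) : ∃ m < k, x m = 1 := by
  obtain ⟨m, hm, hxm⟩ := not_forall₂.1 (mt h.s_eq_zero_iff.2 hk.ne')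
  exact ⟨m, hm, by have := h.x_le_one hx0 m; omega⟩

lemma exists_lt_input_pos_of_eq_one (hx0 : x 0 = 0) : ∀ n, x n = 1 → ∃ m < n, 0 < a m := by
  intro n
  induction n with
  | zero => simp [hx0]
  | succ n ih =>
    intro hn
    by_cases ha : 0 < a n
    · exact ⟨n, n.lt_succ_self, ha⟩
    · have hxn : x n = 1 := by
        have := h.x_le_one (by omega) n
        have := (h.x_succ_eq_one_iff.1 hn).2
        omega
      obtain ⟨m, hm, ham⟩ := ih hxn
      exact ⟨m, by omega, ham⟩

/-- Before the first infection `s = 0 < R`, so the recovery gate is still open; and if it is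
closed, `s ≥ R ≥ 1` shows the agent has been infected already. -/
lemma hitTime_eq_one_eq_hitTime_pos (hx0 : x 0 = 0) (hR : 1 ≤ R) :
    hitTime (x · = 1) = hitTime fun k => 1 ≤ k ∧ 0 < a (k - 1) := by
  refine le_antisymm (hitTime_le_hitTime ?_) (hitTime_le_hitTime ?_)
  · rintro _ ⟨hk, ha⟩
    obtain ⟨k, rfl⟩ := Nat.exists_eq_add_of_le' hk
    rw [Nat.add_sub_cancel] at ha
    by_cases hs : s k < R
    · exact ⟨k + 1, le_rfl, h.x_succ_eq_one_iff.2 ⟨hs, by omega⟩⟩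
    · obtain ⟨m, hm, hxm⟩ := h.exists_lt_eq_one_of_s_pos (k := k) (by omega) (by omega)
      exact ⟨m, by omega, hxm⟩
  · intro n hn
    obtain ⟨m, hm, ham⟩ := h.exists_lt_input_pos_of_eq_one hx0 n hn
    exact ⟨m + 1, hm, by omega, ham⟩

end IsSIRTrajectory

theorem stmt15_general {V : Type*} [Fintype V]
    (E : V → V → Prop) [DecidableRel E]
    (R : V → ℕ) (hR : ∀ i, 1 ≤ R i)
    (c : ℕ → V → V → ℕ) (hc01 : ∀ k i j, c k i j ≤ 1)
    (hcsymm : ∀ k i j, c k i j = c k j i)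
    (u : ℕ → V → ℕ)
    (x0 : V → ℕ)
    (x s : ℕ → V → ℕ)
    (hx_init : ∀ i, x 0 i = x0 i)
    (hs_init : ∀ i, s 0 i = 0)
    (hx_rec : ∀ k i, x (k + 1) i =
      stepFn ((R i : ℤ) - (s k i : ℤ)) *
        stepFn ((x k i : ℤ) +
          (∑ j ∈ Finset.univ.filter (fun j => E j i), (c k i j : ℤ) * (x k j : ℤ)) +
          (u k i : ℤ)))
    (hs_rec : ∀ k i, s (k + 1) i = s k i + x k i)
    (ki : V → ℕ∞)
    (hki : ∀ i, ki i = sInf {n : ℕ∞ | ∃ m : ℕ, x m i = 1 ∧ n = (m : ℕ∞)})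
    (hx0zero : ∀ i, x0 i = 0) :
    ∀ i : V, (∀ k : ℕ, u k i = 0) →
      ki i = ⨅ j ∈ Finset.univ.filter (fun j => E j i),
        sInf {n : ℕ∞ | ∃ k : ℕ, 1 ≤ k ∧ c (k - 1) j i = 1 ∧
          ki j ≤ ((k - 1 : ℕ) : ℕ∞) ∧ ((k - 1 : ℕ) : ℕ∞) ≤ ki j + (R j : ℕ∞) ∧
          n = (k : ℕ∞)} := by
  intro i hu
  have htraj (j : V) : IsSIRTrajectory (R j)
      (fun k => ∑ l ∈ univ.filter (E · j), c k j l * x k l + u k j) (x · j) (s · j) :=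
    ⟨hs_init j, (hs_rec · j), fun k => by rw [hx_rec]; push_cast; ring_nf⟩
  have hstart (j : V) : x 0 j = 0 := (hx_init j).trans (hx0zero j)
  have hx_le_one (k : ℕ) (j : V) : x k j ≤ 1 := (htraj j).x_le_one (by simp [hstart]) k
  have hexposed (m : ℕ) : 0 < ∑ l ∈ univ.filter (E · i), c m i l * x m l + u m i ↔
      ∃ j ∈ univ.filter (E · i), c m j i = 1 ∧ x m j = 1 := by
    simp only [hu, add_zero, sum_pos_iff, Nat.pos_iff_ne_zero, mul_ne_zero_iff, hcsymm m i]
    refine exists_congr fun j => and_congr_right fun _ => and_congr ?_ ?_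
    · have := hc01 m j i; omega
    · have := hx_le_one m j; omega
  have hwindow (j : V) (m : ℕ) : x m j = 1 ↔ ki j ≤ m ∧ (m : ℕ∞) ≤ ki j + R j := by
    rw [hki]
    exact (htraj j).eq_one_iff_hitTime_le_and_le_add (by simp [hstart])
  calc ki i = hitTime fun k => 1 ≤ k ∧
        0 < ∑ l ∈ univ.filter (E · i), c (k - 1) i l * x (k - 1) l + u (k - 1) i :=
      (hki i).trans ((htraj i).hitTime_eq_one_eq_hitTime_pos (hstart i) (hR i))
    _ = hitTime fun k => ∃ j ∈ univ.filter (E · i), 1 ≤ k ∧ c (k - 1) j i = 1 ∧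
          ki j ≤ ((k - 1 : ℕ) : ℕ∞) ∧ ((k - 1 : ℕ) : ℕ∞) ≤ ki j + (R j : ℕ∞) := by
      congr 1
      funext k
      simp only [hexposed, ← hwindow]
      exact propext ⟨fun ⟨hk, j, hj, hj'⟩ => ⟨j, hj, hk, hj'⟩,
        fun ⟨j, hj, hk, hj'⟩ => ⟨hk, j, hj, hj'⟩⟩
    _ = _ := by
      rw [← iInf_hitTime]
      simp only [hitTime, and_assoc]

/-- Pathwise recursion for infection times (protected agent): assuming `x⁰ ≡ 0`, if agent
`i` is protected against external infection (`u_i(k) = 0` for all `k`), then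
`k_i = inf_{j ∈ N_i} inf{k ≥ 1 | c_{ji}(k−1) = 1 and k_j ≤ k−1 ≤ k_j + R_j}`,
infima taken in `ℕ ∪ {∞}`. -/
theorem stmt15 {V : Type*} [Fintype V] [DecidableEq V]
    (E : V → V → Prop) [DecidableRel E]
    (hEsymm : ∀ i j, E i j ↔ E j i) (hEirr : ∀ i, ¬ E i i)
    (R : V → ℕ) (hR : ∀ i, 1 ≤ R i)
    (c : ℕ → V → V → ℕ) (hc01 : ∀ k i j, c k i j ≤ 1)
    (hcsymm : ∀ k i j, c k i j = c k j i)
    (u : ℕ → V → ℕ) (hu01 : ∀ k i, u k i ≤ 1)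
    (x0 : V → ℕ) (hx0 : ∀ i, x0 i ≤ 1)
    (x s : ℕ → V → ℕ)
    (hx_init : ∀ i, x 0 i = x0 i)
    (hs_init : ∀ i, s 0 i = 0)
    (hx_rec : ∀ k i, x (k + 1) i =
      stepFn ((R i : ℤ) - (s k i : ℤ)) *
        stepFn ((x k i : ℤ) +
          (∑ j ∈ Finset.univ.filter (fun j => E j i), (c k i j : ℤ) * (x k j : ℤ)) +
          (u k i : ℤ)))
    (hs_rec : ∀ k i, s (k + 1) i = s k i + x k i)
    (y : ℕ → V → ℕ)
    (hy : ∀ k i, y k i = 1 - stepFn ((R i : ℤ) - (s k i : ℤ)))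
    (ki : V → ℕ∞)
    (hki : ∀ i, ki i = sInf {n : ℕ∞ | ∃ m : ℕ, x m i = 1 ∧ n = (m : ℕ∞)})
    (hx0zero : ∀ i, x0 i = 0) :
    ∀ i : V, (∀ k : ℕ, u k i = 0) →
      ki i = ⨅ j ∈ Finset.univ.filter (fun j => E j i),
        sInf {n : ℕ∞ | ∃ k : ℕ, 1 ≤ k ∧ c (k - 1) j i = 1 ∧
          ki j ≤ ((k - 1 : ℕ) : ℕ∞) ∧ ((k - 1 : ℕ) : ℕ∞) ≤ ki j + (R j : ℕ∞) ∧
          n = (k : ℕ∞)} :=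
  stmt15_general E R hR c hc01 hcsymm u x0 x s hx_init hs_init hx_rec hs_rec ki hki hx0zero
end
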